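/- arXiv:2106.11547 — 5 statements merged into one kernel-verified Lean document; each statement's English description precedes it below -/
import Mathlib

section
/- Let X be a real Hilbert space, let f, g : X → ℝ ∪ {+∞} be proper lower semicontinuous convex functions, let x, y ∈ X with y a minimizer of f + g, and suppose x* ∈ (−∂f(x)) ∩ ∂g(x) (where ∂ denotes the convex subdifferential). Then f(y) = f(x) + ⟨−x*, y − x⟩ and g(y) = g(x) + ⟨x*, y − x⟩. -/
open scoped RealInnerProductSpace

/-- If `y` minimizes `f + g` and `x* ∈ (−∂f(x)) ∩ ∂g(x)`, then
`f(y) = f(x) + ⟨−x*, y − x⟩` and `g(y) = g(x) + ⟨x*, y − x⟩`. -/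
theorem subgradient_values_at_minimizer
    {X : Type*} [NormedAddCommGroup X] [InnerProductSpace ℝ X] [CompleteSpace X]
    (f g : X → EReal)
    (hf_proper : ∃ z, f z ≠ ⊤) (hf_ne_bot : ∀ z, f z ≠ ⊥)
    (hf_lsc : LowerSemicontinuous f)
    (hf_conv : ∀ x y : X, ∀ t : ℝ, 0 ≤ t → t ≤ 1 →
      f (t • x + (1 - t) • y) ≤ (t : EReal) * f x + ((1 - t : ℝ) : EReal) * f y)
    (hg_proper : ∃ z, g z ≠ ⊤) (hg_ne_bot : ∀ z, g z ≠ ⊥)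
    (hg_lsc : LowerSemicontinuous g)
    (hg_conv : ∀ x y : X, ∀ t : ℝ, 0 ≤ t → t ≤ 1 →
      g (t • x + (1 - t) • y) ≤ (t : EReal) * g x + ((1 - t : ℝ) : EReal) * g y)
    (x y : X) (hy : ∀ z, f y + g y ≤ f z + g z)
    (xstar : X)
    (hxf : ∀ z, f x + ((⟪-xstar, z - x⟫ : ℝ) : EReal) ≤ f z)
    (hxg : ∀ z, g x + ((⟪xstar, z - x⟫ : ℝ) : EReal) ≤ g z) :
    f y = f x + ((⟪-xstar, y - x⟫ : ℝ) : EReal) ∧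
    g y = g x + ((⟪xstar, y - x⟫ : ℝ) : EReal) := by
  classical
  -- inner product identity
  have hc : (⟪-xstar, y - x⟫ : ℝ) = -(⟪xstar, y - x⟫ : ℝ) := by
    simp [inner_neg_left]
  -- f x is not ⊤
  have hfxT : f x ≠ ⊤ := by
    intro h
    obtain ⟨z, hz⟩ := hf_proper
    have := hxf z
    rw [h] at this
    simp [EReal.top_add_of_ne_bot] at this
    exact hz this
  have hgxT : g x ≠ ⊤ := by
    intro h
    obtain ⟨z, hz⟩ := hg_proper
    have := hxg z
    rw [h] at this
    simp [EReal.top_add_of_ne_bot] at this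
    exact hz this
  set a := (f x).toReal with ha
  set b := (g x).toReal with hb
  have hfx : f x = (a : EReal) := (EReal.coe_toReal hfxT (hf_ne_bot x)).symm
  have hgx : g x = (b : EReal) := (EReal.coe_toReal hgxT (hg_ne_bot x)).symm
  have hsum : f y + g y ≤ ((a + b : ℝ) : EReal) := by
    have := hy x
    rw [hfx, hgx] at this
    exact this.trans_eq (by push_cast; ring_nf)
  have hfyT : f y ≠ ⊤ := by
    intro h
    rw [h, EReal.top_add_of_ne_bot (hg_ne_bot y)] at hsum
    exact (EReal.coe_lt_top (a + b)).not_ge hsum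
  have hgyT : g y ≠ ⊤ := by
    intro h
    rw [h, EReal.add_top_of_ne_bot (hf_ne_bot y)] at hsum
    exact (EReal.coe_lt_top (a + b)).not_ge hsum
  set p := (f y).toReal with hp
  set q := (g y).toReal with hq
  have hfy : f y = (p : EReal) := (EReal.coe_toReal hfyT (hf_ne_bot y)).symm
  have hgy : g y = (q : EReal) := (EReal.coe_toReal hgyT (hg_ne_bot y)).symm
  have h1 : a + (⟪-xstar, y - x⟫ : ℝ) ≤ p := by
    have := hxf y
    rw [hfx, hfy, ← EReal.coe_add] at this
    exact_mod_cast this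
  have h2 : b + (⟪xstar, y - x⟫ : ℝ) ≤ q := by
    have := hxg y
    rw [hgx, hgy, ← EReal.coe_add] at this
    exact_mod_cast this
  have h3 : p + q ≤ a + b := by
    rw [hfy, hgy, ← EReal.coe_add] at hsum
    exact_mod_cast hsum
  constructor
  · rw [hfx, hfy, ← EReal.coe_add, EReal.coe_eq_coe_iff]
    linarith [hc]
  · rw [hgx, hgy, ← EReal.coe_add, EReal.coe_eq_coe_iff]
    linarith [hc]
end

section
/- Let X be a real Hilbert space, let f, g : X → ℝ ∪ {+∞} be proper lower semicontinuous convex functions, let x, y ∈ X with y a minimizer of f + g, and suppose x* ∈ (−∂f(x)) ∩ ∂g(x). Then x* ∈ (−∂f(y)) ∩ ∂g(y). -/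
open scoped RealInnerProductSpace

/-- If `y` minimizes `f + g` and `x* ∈ (−∂f(x)) ∩ ∂g(x)`,
then `x* ∈ (−∂f(y)) ∩ ∂g(y)`. -/
theorem subgradient_transfers_to_minimizer
    {X : Type*} [NormedAddCommGroup X] [InnerProductSpace ℝ X] [CompleteSpace X]
    (f g : X → EReal)
    (hf_proper : ∃ z, f z ≠ ⊤) (hf_ne_bot : ∀ z, f z ≠ ⊥)
    (hf_lsc : LowerSemicontinuous f)
    (hf_conv : ∀ x y : X, ∀ t : ℝ, 0 ≤ t → t ≤ 1 →
      f (t • x + (1 - t) • y) ≤ (t : EReal) * f x + ((1 - t : ℝ) : EReal) * f y)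
    (hg_proper : ∃ z, g z ≠ ⊤) (hg_ne_bot : ∀ z, g z ≠ ⊥)
    (hg_lsc : LowerSemicontinuous g)
    (hg_conv : ∀ x y : X, ∀ t : ℝ, 0 ≤ t → t ≤ 1 →
      g (t • x + (1 - t) • y) ≤ (t : EReal) * g x + ((1 - t : ℝ) : EReal) * g y)
    (x y : X) (hy : ∀ z, f y + g y ≤ f z + g z)
    (xstar : X)
    (hxf : ∀ z, f x + ((⟪-xstar, z - x⟫ : ℝ) : EReal) ≤ f z)
    (hxg : ∀ z, g x + ((⟪xstar, z - x⟫ : ℝ) : EReal) ≤ g z) :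
    (∀ z, f y + ((⟪-xstar, z - y⟫ : ℝ) : EReal) ≤ f z) ∧
    (∀ z, g y + ((⟪xstar, z - y⟫ : ℝ) : EReal) ≤ g z) := by
  obtain ⟨z₀, hz₀⟩ := hf_proper
  obtain ⟨w₀, hw₀⟩ := hg_proper
  have hfx_ne_top : f x ≠ ⊤ := by
    intro h
    have h1 := hxf z₀
    rw [h, EReal.top_add_coe] at h1
    exact hz₀ (top_le_iff.mp h1)
  have hgx_ne_top : g x ≠ ⊤ := by
    intro h
    have h1 := hxg w₀
    rw [h, EReal.top_add_coe] at h1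
    exact hw₀ (top_le_iff.mp h1)
  lift f x to ℝ using ⟨hfx_ne_top, hf_ne_bot x⟩ with a ha
  lift g x to ℝ using ⟨hgx_ne_top, hg_ne_bot x⟩ with b hb
  have hq : (⟪xstar, y - x⟫ : ℝ) = -⟪-xstar, y - x⟫ := by
    rw [inner_neg_left]; ring
  have hfy_lb : ((a + ⟪-xstar, y - x⟫ : ℝ) : EReal) ≤ f y := by
    have h1 := hxf y
    rwa [← EReal.coe_add] at h1
  have hgy_lb : ((b + -⟪-xstar, y - x⟫ : ℝ) : EReal) ≤ g y := by
    have h1 := hxg y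
    rwa [hq, ← EReal.coe_add] at h1
  have hfy_ne_top : f y ≠ ⊤ := by
    intro h
    have h1 := hy x
    rw [h, EReal.top_add_of_ne_bot (hg_ne_bot y), ← ha, ← hb, ← EReal.coe_add] at h1
    exact (EReal.coe_ne_top _) (top_le_iff.mp h1)
  have hgy_ne_top : g y ≠ ⊤ := by
    intro h
    have h1 := hy x
    rw [h, EReal.add_top_of_ne_bot (hf_ne_bot y), ← ha, ← hb, ← EReal.coe_add] at h1
    exact (EReal.coe_ne_top _) (top_le_iff.mp h1)
  lift f y to ℝ using ⟨hfy_ne_top, hf_ne_bot y⟩ with c hc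
  lift g y to ℝ using ⟨hgy_ne_top, hg_ne_bot y⟩ with d hd
  have hsum : c + d ≤ a + b := by
    have h1 := hy x
    rw [← EReal.coe_add, ← ha, ← hb, ← EReal.coe_add] at h1
    exact_mod_cast h1
  have hcle : a + ⟪-xstar, y - x⟫ ≤ c := by exact_mod_cast hfy_lb
  have hdle : b + -⟪-xstar, y - x⟫ ≤ d := by exact_mod_cast hgy_lb
  have hc_eq : c = a + ⟪-xstar, y - x⟫ := by linarith
  have hd_eq : d = b - ⟪-xstar, y - x⟫ := by linarith
  have hinner : ∀ z : X, (⟪-xstar, z - y⟫ : ℝ) + ⟪-xstar, y - x⟫ = ⟪-xstar, z - x⟫ := by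
    intro z
    rw [← inner_add_right]
    congr 1
    abel
  constructor
  · intro z
    have h1 := hxf z
    rw [← EReal.coe_add] at h1
    rw [← EReal.coe_add]
    refine le_trans (EReal.coe_le_coe_iff.mpr ?_) h1
    rw [hc_eq]
    linarith [hinner z]
  · intro z
    have h1 := hxg z
    rw [← EReal.coe_add] at h1
    rw [← EReal.coe_add]
    refine le_trans (EReal.coe_le_coe_iff.mpr ?_) h1
    have h2 : (⟪xstar, z - y⟫ : ℝ) = -⟪-xstar, z - y⟫ := by rw [inner_neg_left]; ring
    have h3 : (⟪xstar, z - x⟫ : ℝ) = -⟪-xstar, z - x⟫ := by rw [inner_neg_left]; ring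
    rw [hd_eq, h2, h3]
    linarith [hinner z]
end

section
/- Let X be a real Hilbert space and let f, g : X → ℝ ∪ {+∞} be proper lower semicontinuous convex functions such that there exists x with 0 ∈ ∂f(x) + ∂g(x). Then the set of minimizers of f + g equals the set {x ∈ X : 0 ∈ ∂f(x) + ∂g(x)}. -/
open scoped RealInnerProductSpace

private theorem aux_rearr (a b : EReal) (ha : a ≠ ⊥) (hb : b ≠ ⊥) (c : ℝ) :
    a + b = (a + (c : EReal)) + (b + ((-c : ℝ) : EReal)) := by
  induction a using EReal.rec with
  | bot => exact absurd rfl ha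
  | top =>
    rw [EReal.top_add_of_ne_bot hb, EReal.top_add_of_ne_bot (EReal.coe_ne_bot c),
      EReal.top_add_of_ne_bot]
    simp [EReal.add_eq_bot_iff, hb]
  | coe a =>
    induction b using EReal.rec with
    | bot => exact absurd rfl hb
    | top =>
      rw [EReal.add_top_of_ne_bot (EReal.coe_ne_bot a),
        EReal.top_add_of_ne_bot (EReal.coe_ne_bot _),
        EReal.add_top_of_ne_bot]
      simp [EReal.add_eq_bot_iff]
    | coe b =>
      norm_cast
      ring

private theorem aux_min {X : Type*} [NormedAddCommGroup X] [InnerProductSpace ℝ X]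
    (f g : X → EReal) (hf_ne_bot : ∀ z, f z ≠ ⊥) (hg_ne_bot : ∀ z, g z ≠ ⊥)
    (x u : X)
    (hfu : ∀ z, f x + ((⟪u, z - x⟫ : ℝ) : EReal) ≤ f z)
    (hgu : ∀ z, g x + ((⟪-u, z - x⟫ : ℝ) : EReal) ≤ g z) :
    ∀ z, f x + g x ≤ f z + g z := by
  intro z
  have hneg : (⟪-u, z - x⟫ : ℝ) = -(⟪u, z - x⟫ : ℝ) := inner_neg_left _ _
  rw [aux_rearr (f x) (g x) (hf_ne_bot x) (hg_ne_bot x) (⟪u, z - x⟫ : ℝ)]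
  exact add_le_add (hfu z) (by rw [← hneg]; exact hgu z)

theorem argmin_eq_zer_sum_subdifferentials
    {X : Type*} [NormedAddCommGroup X] [InnerProductSpace ℝ X] [CompleteSpace X]
    (f g : X → EReal)
    (hf_proper : ∃ z, f z ≠ ⊤) (hf_ne_bot : ∀ z, f z ≠ ⊥)
    (hf_lsc : LowerSemicontinuous f)
    (hf_conv : ∀ x y : X, ∀ t : ℝ, 0 ≤ t → t ≤ 1 →
      f (t • x + (1 - t) • y) ≤ (t : EReal) * f x + ((1 - t : ℝ) : EReal) * f y)
    (hg_proper : ∃ z, g z ≠ ⊤) (hg_ne_bot : ∀ z, g z ≠ ⊥)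
    (hg_lsc : LowerSemicontinuous g)
    (hg_conv : ∀ x y : X, ∀ t : ℝ, 0 ≤ t → t ≤ 1 →
      g (t • x + (1 - t) • y) ≤ (t : EReal) * g x + ((1 - t : ℝ) : EReal) * g y)
    (hzer : ∃ x : X, ∃ u : X,
      (∀ z, f x + ((⟪u, z - x⟫ : ℝ) : EReal) ≤ f z) ∧
      (∀ z, g x + ((⟪-u, z - x⟫ : ℝ) : EReal) ≤ g z)) :
    {x : X | ∀ z, f x + g x ≤ f z + g z} =
      {x : X | ∃ u : X,
        (∀ z, f x + ((⟪u, z - x⟫ : ℝ) : EReal) ≤ f z) ∧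
        (∀ z, g x + ((⟪-u, z - x⟫ : ℝ) : EReal) ≤ g z)} := by
  obtain ⟨x₀, u, hfu, hgu⟩ := hzer
  obtain ⟨zf, hzf⟩ := hf_proper
  obtain ⟨zg, hzg⟩ := hg_proper
  -- f x₀ and g x₀ are finite
  have hfx₀_top : f x₀ ≠ ⊤ := by
    intro h
    have h1 := hfu zf
    rw [h, EReal.top_add_of_ne_bot (EReal.coe_ne_bot _)] at h1
    exact hzf (top_le_iff.mp h1)
  have hgx₀_top : g x₀ ≠ ⊤ := by
    intro h
    have h1 := hgu zg
    rw [h, EReal.top_add_of_ne_bot (EReal.coe_ne_bot _)] at h1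
    exact hzg (top_le_iff.mp h1)
  obtain ⟨a₀, ha₀⟩ : ∃ r : ℝ, f x₀ = (r : EReal) :=
    ⟨(f x₀).toReal, (EReal.coe_toReal hfx₀_top (hf_ne_bot x₀)).symm⟩
  obtain ⟨b₀, hb₀⟩ : ∃ r : ℝ, g x₀ = (r : EReal) :=
    ⟨(g x₀).toReal, (EReal.coe_toReal hgx₀_top (hg_ne_bot x₀)).symm⟩
  have hx₀min : ∀ z, f x₀ + g x₀ ≤ f z + g z :=
    aux_min f g hf_ne_bot hg_ne_bot x₀ u hfu hgu
  ext x
  simp only [Set.mem_setOf_eq]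
  constructor
  · intro hx
    -- x is a minimizer; f x + g x = f x₀ + g x₀
    have heq : f x + g x = f x₀ + g x₀ := le_antisymm (hx x₀) (hx₀min x)
    -- f x and g x are finite
    have hsum_top : f x + g x ≠ ⊤ := by
      rw [heq, ha₀, hb₀]; exact_mod_cast EReal.coe_ne_top _
    have hfx_top : f x ≠ ⊤ := fun h => hsum_top (by
      rw [h, EReal.top_add_of_ne_bot (hg_ne_bot x)])
    have hgx_top : g x ≠ ⊤ := fun h => hsum_top (by
      rw [h, EReal.add_top_of_ne_bot (hf_ne_bot x)])
    obtain ⟨a, ha⟩ : ∃ r : ℝ, f x = (r : EReal) :=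
      ⟨(f x).toReal, (EReal.coe_toReal hfx_top (hf_ne_bot x)).symm⟩
    obtain ⟨b, hb⟩ : ∃ r : ℝ, g x = (r : EReal) :=
      ⟨(g x).toReal, (EReal.coe_toReal hgx_top (hg_ne_bot x)).symm⟩
    set c : ℝ := ⟪u, x - x₀⟫ with hc
    have hfa : a₀ + c ≤ a := by
      have := hfu x
      rw [ha₀, ha, ← EReal.coe_add] at this
      exact_mod_cast this
    have hgb : b₀ + (-c) ≤ b := by
      have := hgu x
      rw [hb₀, hb, inner_neg_left, ← EReal.coe_add] at this
      exact_mod_cast this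
    have habeq : a + b = a₀ + b₀ := by
      have := heq
      rw [ha, hb, ha₀, hb₀, ← EReal.coe_add, ← EReal.coe_add] at this
      exact_mod_cast this
    have hA : a = a₀ + c := by linarith
    have hB : b = b₀ + (-c) := by linarith
    refine ⟨u, fun z => ?_, fun z => ?_⟩
    · have h1 := hfu z
      rw [ha₀] at h1
      rw [ha, hA]
      calc ((a₀ + c : ℝ) : EReal) + ((⟪u, z - x⟫ : ℝ) : EReal)
          = ((a₀ + (c + ⟪u, z - x⟫) : ℝ) : EReal) := by norm_cast; ring
        _ = (a₀ : EReal) + ((⟪u, z - x₀⟫ : ℝ) : EReal) := by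
            rw [hc]
            rw [show (⟪u, x - x₀⟫ : ℝ) + (⟪u, z - x⟫ : ℝ) = (⟪u, z - x₀⟫ : ℝ) by
              rw [← inner_add_right]; congr 1; abel]
            norm_cast
        _ ≤ f z := h1
    · have h1 := hgu z
      rw [hb₀] at h1
      rw [hb, hB]
      calc ((b₀ + -c : ℝ) : EReal) + ((⟪-u, z - x⟫ : ℝ) : EReal)
          = ((b₀ + (-c + ⟪-u, z - x⟫) : ℝ) : EReal) := by norm_cast; ring
        _ = (b₀ : EReal) + ((⟪-u, z - x₀⟫ : ℝ) : EReal) := by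
            rw [show (-c + ⟪-u, z - x⟫ : ℝ) = (⟪-u, z - x₀⟫ : ℝ) by
              rw [hc, inner_neg_left, inner_neg_left, ← neg_add, ← inner_add_right]
              congr 2; abel]
            norm_cast
        _ ≤ g z := h1
  · rintro ⟨v, hfv, hgv⟩
    exact aux_min f g hf_ne_bot hg_ne_bot x v hfv hgv
end

section
/- Let X be a real Hilbert space, let U ⊆ X be a closed linear subspace, let a ∈ U^⊥ and b ∈ U, and set v = a + b. Then the set Z = {x ∈ X : 0 ∈ −v + N_{a+U}(x) + b + N_U(x − v)} equals a + U. -/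
open scoped RealInnerProductSpace

/-- The normal cone to a set `D` at `x` (empty if `x ∉ D`). -/
def normalCone {X : Type*} [NormedAddCommGroup X] [InnerProductSpace ℝ X]
    (D : Set X) (x : X) : Set X :=
  {u : X | x ∈ D ∧ ∀ d ∈ D, ⟪u, d - x⟫ ≤ (0 : ℝ)}

/-- Example 4.5(v): with `U` a closed subspace, `a ∈ U^⊥`,
`b ∈ U` and `v = a + b`, the set
`Z = {x : 0 ∈ −v + N_{a+U}(x) + b + N_U(x − v)}` equals `a + U`. -/
theorem Z_eq_shifted_subspace
    {X : Type*} [NormedAddCommGroup X] [InnerProductSpace ℝ X] [CompleteSpace X]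
    (U : Submodule ℝ X) (hU : IsClosed (U : Set X))
    (a b : X) (ha : a ∈ Uᗮ) (hb : b ∈ U)
    (v : X) (hv : v = a + b) :
    {x : X | ∃ u₁ ∈ normalCone ((fun w => a + w) '' (U : Set X)) x,
      ∃ u₂ ∈ normalCone (U : Set X) (x - v), (0 : X) = -v + u₁ + b + u₂} =
    (fun w => a + w) '' (U : Set X) := by
  ext x
  constructor
  · rintro ⟨u₁, ⟨hx, -⟩, -⟩
    exact hx
  · rintro ⟨w, hw, rfl⟩
    refine ⟨a, ⟨⟨w, hw, rfl⟩, ?_⟩, 0, ⟨?_, ?_⟩, ?_⟩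
    · rintro d ⟨w', hw', rfl⟩
      have : a + w' - (a + w) = w' - w := by abel
      rw [this]
      have := (Submodule.mem_orthogonal U a).mp ha (w' - w) (U.sub_mem hw' hw)
      rw [real_inner_comm] at this
      exact le_of_eq this
    · have : a + w - v = w - b := by rw [hv]; abel
      rw [this]
      exact U.sub_mem hw hb
    · intro d hd
      simp [inner_zero_left]
    · rw [hv]; abel
end

section
/- Let X be a real Hilbert space, f, g ∈ Γ₀(X), and v ∈ X such that ⟨v, v − (a − b)⟩ ≤ 0 for all a ∈ dom f and b ∈ dom g (i.e., v is the point of minimal norm in the closure of dom f − dom g). Let x ∈ X and y ∈ dom f with y − v ∈ dom g. Then ⟨y − P_f x, v⟩ ≤ 0 and f(y) ≥ f(P_f x) + ⟨y − P_f x, v + P_{f*} x⟩, where P_{f*} x = x − P_f x. -/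
/-!
Part (i) is the hypothesis on `v` applied to `a = p ∈ dom f` and `b = y - v ∈ dom g`, since
`v - (p - (y - v)) = y - p`. Part (ii) is the variational characterisation of the proximal point:
comparing `p` with `p + t (y - p)` in the minimisation defining `p` and using convexity of `f`
along the segment gives `f p - f y + ⟪y - p, x - p⟫ ≤ t ‖y - p‖² / 2` for `t ∈ (0, 1]`;
let `t → 0`.
-/

open scoped RealInnerProductSpace
open Filter Topology

lemma nonpos_of_forall_le_mul {a M : ℝ} (h : ∀ t : ℝ, 0 < t → t ≤ 1 → a ≤ t * M) : a ≤ 0 := by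
  have hlim : Tendsto (fun t : ℝ => t * M) (𝓝[>] 0) (𝓝 0) :=
    ((continuous_mul_const M).tendsto' 0 0 (zero_mul M)).mono_left nhdsWithin_le_nhds
  refine ge_of_tendsto hlim ?_
  filter_upwards [Ioc_mem_nhdsGT zero_lt_one] with t ⟨ht0, ht1⟩ using h t ht0 ht1

lemma convexOn_toReal_of_ereal {E : Type*} [AddCommGroup E] [Module ℝ E] {f : E → EReal}
    (hbot : ∀ z, f z ≠ ⊥)
    (hconv : ∀ x y : E, ∀ t : ℝ, 0 ≤ t → t ≤ 1 →
      f (t • x + (1 - t) • y) ≤ (t : EReal) * f x + ((1 - t : ℝ) : EReal) * f y) :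
    ConvexOn ℝ {z | f z ≠ ⊤} (fun z => (f z).toReal) := by
  have hcomb : ∀ ⦃x⦄, f x ≠ ⊤ → ∀ ⦃y⦄, f y ≠ ⊤ → ∀ ⦃a b : ℝ⦄, 0 ≤ a → 0 ≤ b → a + b = 1 →
      f (a • x + b • y) ≤ ((a * (f x).toReal + b * (f y).toReal : ℝ) : EReal) := by
    intro x hx y hy a b ha hb hab
    obtain rfl : b = 1 - a := eq_sub_of_add_eq' hab
    have h := hconv x y a ha (by linarith)
    rwa [← EReal.coe_toReal hx (hbot x), ← EReal.coe_toReal hy (hbot y), ← EReal.coe_mul,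
      ← EReal.coe_mul, ← EReal.coe_add] at h
  refine ⟨fun x hx y hy a b ha hb hab => ?_, fun x hx y hy a b ha hb hab => ?_⟩
  · exact ne_top_of_le_ne_top (EReal.coe_ne_top _) (hcomb hx hy ha hb hab)
  · exact (EReal.toReal_le_toReal (hcomb hx hy ha hb hab) (hbot _) (EReal.coe_ne_top _)).trans_eq
      (EReal.toReal_coe _)

theorem ConvexOn.add_inner_le_of_isMinOn_add_half_sq
    {X : Type*} [NormedAddCommGroup X] [InnerProductSpace ℝ X] {s : Set X} {φ : X → ℝ}
    (hφ : ConvexOn ℝ s φ) {x p y : X} (hp : p ∈ s) (hy : y ∈ s)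
    (hmin : IsMinOn (fun z => φ z + 1 / 2 * ‖z - x‖ ^ 2) s p) :
    φ p + ⟪y - p, x - p⟫ ≤ φ y := by
  suffices φ p - φ y + ⟪y - p, x - p⟫ ≤ 0 by linarith
  refine nonpos_of_forall_le_mul (M := 1 / 2 * ‖y - p‖ ^ 2) fun t ht0 ht1 => ?_
  have hconv := hφ.2 hp hy (sub_nonneg.2 ht1) ht0.le (sub_add_cancel 1 t)
  have hz : (1 - t) • p + t • y - x = (p - x) + t • (y - p) := by
    simp only [sub_smul, one_smul, smul_sub]; abel
  have hmin_t := isMinOn_iff.1 hmin _ (hφ.1 hp hy (sub_nonneg.2 ht1) ht0.le (sub_add_cancel 1 t))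
  simp only [hz, norm_add_sq_real, inner_smul_right, norm_smul, Real.norm_eq_abs,
    abs_of_pos ht0, mul_pow, smul_eq_mul] at hmin_t hconv
  have hinner : ⟪p - x, y - p⟫ = -⟪y - p, x - p⟫ := by
    rw [real_inner_comm, ← inner_neg_right, neg_sub]
  rw [hinner] at hmin_t
  have key : t * (φ p - φ y + ⟪y - p, x - p⟫) ≤ t * (t * (1 / 2 * ‖y - p‖ ^ 2)) := by
    nlinarith
  exact le_of_mul_le_mul_left key ht0

theorem prox_lemma_general
    {X : Type*} [NormedAddCommGroup X] [InnerProductSpace ℝ X]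
    (f g : X → EReal)
    (hf_ne_bot : ∀ z, f z ≠ ⊥)
    (hf_conv : ∀ x y : X, ∀ t : ℝ, 0 ≤ t → t ≤ 1 →
      f (t • x + (1 - t) • y) ≤ (t : EReal) * f x + ((1 - t : ℝ) : EReal) * f y)
    (v : X)
    (hv : ∀ a b_ : X, f a ≠ ⊤ → g b_ ≠ ⊤ → ⟪v, v - (a - b_)⟫ ≤ (0 : ℝ))
    (x y : X) (hyf : f y ≠ ⊤) (hyg : g (y - v) ≠ ⊤)
    (p : X)
    (hp : ∀ z, f p + (((1 / 2) * ‖p - x‖ ^ 2 : ℝ) : EReal) ≤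
               f z + (((1 / 2) * ‖z - x‖ ^ 2 : ℝ) : EReal)) :
    ⟪y - p, v⟫ ≤ (0 : ℝ) ∧
    f p + ((⟪y - p, v + (x - p)⟫ : ℝ) : EReal) ≤ f y := by
  have hfp : f p ≠ ⊤ := fun h => by
    have hlt := (hp y).trans_lt (EReal.add_lt_top hyf (EReal.coe_ne_top _))
    rw [h, EReal.top_add_of_ne_bot (EReal.coe_ne_bot _)] at hlt
    exact lt_irrefl _ hlt
  have hi : ⟪y - p, v⟫ ≤ (0 : ℝ) := by
    rw [real_inner_comm, show y - p = v - (p - (y - v)) by abel]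
    exact hv p (y - v) hfp hyg
  have hmin : IsMinOn (fun z => (f z).toReal + 1 / 2 * ‖z - x‖ ^ 2) {z | f z ≠ ⊤} p :=
    isMinOn_iff.2 fun z hz => by
      have h := hp z
      rwa [← EReal.coe_toReal hfp (hf_ne_bot p), ← EReal.coe_toReal hz (hf_ne_bot z),
        ← EReal.coe_add, ← EReal.coe_add, EReal.coe_le_coe_iff] at h
  have hprox := (convexOn_toReal_of_ereal hf_ne_bot hf_conv).add_inner_le_of_isMinOn_add_half_sq
    hfp hyf hmin
  refine ⟨hi, ?_⟩
  rw [← EReal.coe_toReal hfp (hf_ne_bot p), ← EReal.coe_toReal hyf (hf_ne_bot y),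
    ← EReal.coe_add, EReal.coe_le_coe_iff, inner_add_right]
  linarith

/-- the prox lemma, Lemma 6.3 (i)–(ii): if `v` satisfies
`⟨v, v − (a − b)⟩ ≤ 0` for all `a ∈ dom f`, `b ∈ dom g`, and
`y ∈ dom f ∩ (v + dom g)`, then for any `x` and `p = P_f x` one has
`⟨y − p, v⟩ ≤ 0` and `f(y) ≥ f(p) + ⟨y − p, v + (x − p)⟩`
(note `P_{f*} x = x − P_f x`). -/
theorem prox_lemma
    {X : Type*} [NormedAddCommGroup X] [InnerProductSpace ℝ X] [CompleteSpace X]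
    (f g : X → EReal)
    (hf_proper : ∃ z, f z ≠ ⊤) (hf_ne_bot : ∀ z, f z ≠ ⊥)
    (hf_lsc : LowerSemicontinuous f)
    (hf_conv : ∀ x y : X, ∀ t : ℝ, 0 ≤ t → t ≤ 1 →
      f (t • x + (1 - t) • y) ≤ (t : EReal) * f x + ((1 - t : ℝ) : EReal) * f y)
    (hg_proper : ∃ z, g z ≠ ⊤) (hg_ne_bot : ∀ z, g z ≠ ⊥)
    (hg_lsc : LowerSemicontinuous g)
    (hg_conv : ∀ x y : X, ∀ t : ℝ, 0 ≤ t → t ≤ 1 →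
      g (t • x + (1 - t) • y) ≤ (t : EReal) * g x + ((1 - t : ℝ) : EReal) * g y)
    (v : X)
    (hv : ∀ a b_ : X, f a ≠ ⊤ → g b_ ≠ ⊤ → ⟪v, v - (a - b_)⟫ ≤ (0 : ℝ))
    (x y : X) (hyf : f y ≠ ⊤) (hyg : g (y - v) ≠ ⊤)
    (p : X)
    (hp : ∀ z, f p + (((1 / 2) * ‖p - x‖ ^ 2 : ℝ) : EReal) ≤
               f z + (((1 / 2) * ‖z - x‖ ^ 2 : ℝ) : EReal)) :
    ⟪y - p, v⟫ ≤ (0 : ℝ) ∧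
    f p + ((⟪y - p, v + (x - p)⟫ : ℝ) : EReal) ≤ f y :=
  prox_lemma_general f g hf_ne_bot hf_conv v hv x y hyf hyg p hp
end
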